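/- Let R be a nontrivial commutative ring, e ≥ 1 an integer, A := R[X]/(X^e), and let π denote the image of X in A. Let M be a finite free A-module of rank m, and for 0 ≤ j ≤ e let M[π^j] denote the kernel of multiplication by π^j on M. Then for every 0 ≤ j ≤ e: (i) M[π^j] = π^{e−j}·M; (ii) multiplication by π^j induces an A-module isomorphism M/M[π^j] ≅ M[π^{e−j}] (the inverse of this isomorphism is called division by π^j); (iii) M[π^j] is a direct summand of M as an R-module, and is a finite free R-module of rank j·m. -/

import Mathlib

/-- The ring `A = R[X]/(X^e)`. -/
abbrev TruncPoly (R : Type*) [CommRing R] (e : ℕ) : Type _ :=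
  Polynomial R ⧸ Ideal.span {(Polynomial.X : Polynomial R) ^ e}

/-- The image `π` of `X` in `A = R[X]/(X^e)`. -/
noncomputable def piX (R : Type*) [CommRing R] (e : ℕ) : TruncPoly R e :=
  Ideal.Quotient.mk _ Polynomial.X

/-!
Write `A = R[X]/(X^e)`. In `A` itself, `π^j a = 0` forces `X^(e-j) ∣ a`, and applying this to the
coordinates of an element of `M` in an `A`-basis `(b i)` gives `M[π^j] = π^(e-j) M`. Part (ii)
is then the first isomorphism theorem for multiplication by `π^j`, whose image is
`π^j M = M[π^(e-j)]`. Finally the `π^k • b i` (`k < e`) form an `R`-basis of `M`, and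
`π^(e-j) M` is the `R`-span of those with `e - j ≤ k`; the others span an `R`-complement.
-/

open Polynomial LinearMap Submodule

namespace TruncPoly

variable {R : Type*} [CommRing R] {e : ℕ}

theorem piX_pow_self : piX R e ^ e = 0 := by
  rw [piX, ← map_pow, Ideal.Quotient.eq_zero_iff_mem]
  exact Ideal.subset_span rfl

theorem piX_pow_eq_zero {n : ℕ} (h : e ≤ n) : piX R e ^ n = 0 := by
  rw [← Nat.add_sub_cancel' h, pow_add, piX_pow_self, zero_mul]

theorem eq_piX_pow_mul_of_piX_pow_mul_eq_zero {j : ℕ} (hj : j ≤ e) {a : TruncPoly R e}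
    (h : piX R e ^ j * a = 0) : ∃ c, a = piX R e ^ (e - j) * c := by
  obtain ⟨p, rfl⟩ := Ideal.Quotient.mk_surjective a
  rw [piX, ← map_pow, ← map_mul, Ideal.Quotient.eq_zero_iff_mem, Ideal.mem_span_singleton,
    X_pow_dvd_iff] at h
  obtain ⟨q, rfl⟩ : (X : R[X]) ^ (e - j) ∣ p := by
    refine X_pow_dvd_iff.mpr fun d hd => ?_
    simpa only [coeff_X_pow_mul] using h (d + j) (by omega)
  exact ⟨Ideal.Quotient.mk _ q, by rw [piX, ← map_pow, ← map_mul]⟩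

variable (R e) in
noncomputable def basis [Nontrivial R] : Module.Basis (Fin e) R (TruncPoly R e) :=
  (AdjoinRoot.powerBasis' (monic_X_pow e)).basis.reindex (finCongr (natDegree_X_pow e))

theorem basis_apply [Nontrivial R] (k : Fin e) : basis R e k = piX R e ^ (k : ℕ) := by
  unfold basis
  -- `TruncPoly R e` is `AdjoinRoot (X ^ e)` only after unfolding, hence `erw`
  erw [Module.Basis.reindex_apply, PowerBasis.coe_basis]
  rfl

theorem nontrivial_of_one_le [Nontrivial R] (he : 1 ≤ e) : Nontrivial (TruncPoly R e) :=
  nontrivial_of_ne _ _ ((basis R e).ne_zero ⟨0, he⟩)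

section Module

variable {M : Type*} [AddCommGroup M] [Module (TruncPoly R e) M]

theorem piX_pow_smul_eq_zero {n : ℕ} (h : e ≤ n) (x : M) : piX R e ^ n • x = 0 := by
  rw [piX_pow_eq_zero h]
  exact zero_smul (TruncPoly R e) x

theorem ker_lsmul_piX_pow_eq_range [Module.Free (TruncPoly R e) M] {j : ℕ} (hj : j ≤ e) :
    ker (lsmul (TruncPoly R e) M (piX R e ^ j)) =
      range (lsmul (TruncPoly R e) M (piX R e ^ (e - j))) := by
  let b := Module.Free.chooseBasis (TruncPoly R e) M
  refine le_antisymm (fun x hx => ?_) ?_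
  · rw [← b.linearCombination_repr x, Finsupp.linearCombination_apply]
    refine Submodule.finsuppSum_mem _ _ _ _ fun i _ => ?_
    have hxi : piX R e ^ j * b.repr x i = 0 := by
      simpa using congr($(b.repr.congr_arg (mem_ker.mp hx)) i)
    obtain ⟨c, hc⟩ := eq_piX_pow_mul_of_piX_pow_mul_eq_zero hj hxi
    exact ⟨c • b i, by rw [lsmul_apply, hc, mul_smul]⟩
  · rintro _ ⟨y, rfl⟩
    rw [mem_ker, lsmul_apply, lsmul_apply, smul_smul, ← pow_add]
    exact piX_pow_smul_eq_zero (by omega) y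

variable [Nontrivial R] [Module R M] [IsScalarTower R (TruncPoly R e) M]
  {ι : Type*} (b : Module.Basis ι (TruncPoly R e) M)

noncomputable def restrictScalarsBasis : Module.Basis (Fin e × ι) R M :=
  (basis R e).smulTower b

theorem restrictScalarsBasis_apply (p : Fin e × ι) :
    restrictScalarsBasis b p = piX R e ^ (p.1 : ℕ) • b p.2 := by
  rw [restrictScalarsBasis, Module.Basis.smulTower_apply, basis_apply]

def topIndex {j : ℕ} (hj : j ≤ e) (p : Fin j × ι) : Fin e × ι :=
  (⟨e - j + p.1, by omega⟩, p.2)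

theorem topIndex_injective {j : ℕ} (hj : j ≤ e) : Function.Injective (topIndex (ι := ι) hj) := by
  rintro ⟨k, i⟩ ⟨k', i'⟩ h
  simp only [topIndex, Prod.mk.injEq, Fin.mk.injEq, Nat.add_left_cancel_iff] at h
  exact Prod.ext (Fin.ext h.1) h.2

theorem restrictScalars_ker_lsmul_piX_pow_eq_span {j : ℕ} (hj : j ≤ e) :
    (ker (lsmul (TruncPoly R e) M (piX R e ^ j))).restrictScalars R =
      span R (restrictScalarsBasis b '' Set.range (topIndex hj)) := by
  have := Module.Free.of_basis b
  refine le_antisymm (fun x hx => ?_) (span_le.mpr ?_)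
  · obtain ⟨y, rfl⟩ := (ker_lsmul_piX_pow_eq_range hj).le hx
    rw [lsmul_apply, ← (restrictScalarsBasis b).linearCombination_repr y,
      Finsupp.linearCombination_apply, Finsupp.smul_sum]
    refine Submodule.finsuppSum_mem _ _ _ _ fun p _ => ?_
    rw [smul_comm, restrictScalarsBasis_apply, smul_smul, ← pow_add]
    refine smul_mem _ _ ?_
    by_cases hk : (p.1 : ℕ) < j
    · refine subset_span ⟨_, ⟨(⟨p.1, hk⟩, p.2), rfl⟩, ?_⟩
      simp only [restrictScalarsBasis_apply, topIndex, Nat.add_comm]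
    · rw [piX_pow_smul_eq_zero (by omega)]
      exact zero_mem _
  · rintro _ ⟨_, ⟨p, rfl⟩, rfl⟩
    rw [SetLike.mem_coe, restrictScalars_mem, mem_ker, lsmul_apply, restrictScalarsBasis_apply,
      smul_smul, ← pow_add]
    exact piX_pow_smul_eq_zero (by simp only [topIndex]; omega) _

theorem isCompl_restrictScalars_ker_lsmul_piX_pow {j : ℕ} (hj : j ≤ e) :
    IsCompl ((ker (lsmul (TruncPoly R e) M (piX R e ^ j))).restrictScalars R)
      (span R (restrictScalarsBasis b '' (Set.range (topIndex hj))ᶜ)) := by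
  rw [restrictScalars_ker_lsmul_piX_pow_eq_span b hj]
  exact (restrictScalarsBasis b).linearIndependent.isCompl_span_image
    (restrictScalarsBasis b).span_eq isCompl_compl

noncomputable def kerLsmulPiXPowBasis {j : ℕ} (hj : j ≤ e) :
    Module.Basis (Fin j × ι) R (ker (lsmul (TruncPoly R e) M (piX R e ^ j))) :=
  (Module.Basis.span ((restrictScalarsBasis b).linearIndependent.comp _
    (topIndex_injective hj))).map <|
      (LinearEquiv.ofEq _ _ (by rw [restrictScalars_ker_lsmul_piX_pow_eq_span b hj,
        Set.range_comp])).symm.trans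
      ((restrictScalarsEquiv R (TruncPoly R e) M _).restrictScalars R)

end Module

end TruncPoly

open TruncPoly in
theorem pi_torsion_finite_free_module
    (R : Type*) [CommRing R] [Nontrivial R] (e : ℕ) (he : 1 ≤ e) (m : ℕ)
    (M : Type*) [AddCommGroup M] [Module (TruncPoly R e) M] [Module R M]
    [IsScalarTower R (TruncPoly R e) M]
    [Module.Finite (TruncPoly R e) M] [Module.Free (TruncPoly R e) M]
    (hrank : Module.finrank (TruncPoly R e) M = m)
    (j : ℕ) (hj : j ≤ e) :
    LinearMap.ker (LinearMap.lsmul (TruncPoly R e) M (piX R e ^ j)) =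
        LinearMap.range (LinearMap.lsmul (TruncPoly R e) M (piX R e ^ (e - j))) ∧
    (∃ φ : (M ⧸ LinearMap.ker (LinearMap.lsmul (TruncPoly R e) M (piX R e ^ j))) ≃ₗ[TruncPoly R e]
        LinearMap.ker (LinearMap.lsmul (TruncPoly R e) M (piX R e ^ (e - j))),
      ∀ x : M, (φ (Submodule.Quotient.mk x) : M) = piX R e ^ j • x) ∧
    (∃ q : Submodule R M,
      IsCompl ((LinearMap.ker (LinearMap.lsmul (TruncPoly R e) M
        (piX R e ^ j))).restrictScalars R) q) ∧
    Module.Finite R (LinearMap.ker (LinearMap.lsmul (TruncPoly R e) M (piX R e ^ j))) ∧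
    Module.Free R (LinearMap.ker (LinearMap.lsmul (TruncPoly R e) M (piX R e ^ j))) ∧
    Module.finrank R (LinearMap.ker (LinearMap.lsmul (TruncPoly R e) M (piX R e ^ j))) = j * m := by
  have := nontrivial_of_one_le (R := R) he
  let b := Module.finBasisOfFinrankEq (TruncPoly R e) M hrank
  have hdual : ker (lsmul (TruncPoly R e) M (piX R e ^ (e - j))) =
      range (lsmul (TruncPoly R e) M (piX R e ^ j)) := by
    simpa only [Nat.sub_sub_self hj] using ker_lsmul_piX_pow_eq_range (Nat.sub_le e j)
  refine ⟨ker_lsmul_piX_pow_eq_range hj,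
    ⟨(quotKerEquivRange _).trans (LinearEquiv.ofEq _ _ hdual.symm), fun x => rfl⟩,
    ⟨_, isCompl_restrictScalars_ker_lsmul_piX_pow b hj⟩,
    .of_basis (kerLsmulPiXPowBasis b hj), .of_basis (kerLsmulPiXPowBasis b hj), ?_⟩
  rw [Module.finrank_eq_card_basis (kerLsmulPiXPowBasis b hj), Fintype.card_prod,
    Fintype.card_fin, Fintype.card_fin]
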